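/- Let D = (G, O, w) be a weighted oriented graph containing a basic 5-cycle C = (z₁, z₂, z₃, z₄, z₅, z₁) with (z₁,z₂), (z₂,z₃) ∈ E(D) and w(z₂) > 1, and suppose C satisfies one of the following: (a) (z₃,z₄) ∈ E(D) with w(z₃) > 1; (b) (z₁,z₅), (z₅,z₄) ∈ E(D) with w(z₅) > 1. Then there is a strong vertex cover C̃ of D such that |C̃ ∩ V(C)| = 4. -/

import Mathlib

/-! ## Weighted oriented graphs -/

/-- A weighted oriented graph `D = (G, 𝒪, w)`: an orientation of a finite simple
graph together with a weight function, where sources have weight `1`. -/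
structure WOGraph (V : Type) where
  /-- the set of directed edges -/
  E : V → V → Prop
  irrefl : ∀ x, ¬ E x x
  asymm : ∀ x y, E x y → ¬ E y x
  /-- the weight function -/
  w : V → ℕ
  w_pos : ∀ x, 1 ≤ w x
  source_one : ∀ x, (∀ y, ¬ E y x) → w x = 1

namespace WOGraph

variable {V : Type}

/-- The underlying simple graph `G` of `D`. -/
def graph (D : WOGraph V) : SimpleGraph V := SimpleGraph.fromRel D.E

/-- Out-neighbourhood `N⁺_D(x)`. -/
def outN (D : WOGraph V) (x : V) : Set V := {y | D.E x y}

/-- In-neighbourhood `N⁻_D(x)`. -/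
def inN (D : WOGraph V) (x : V) : Set V := {y | D.E y x}

/-- Neighbourhood `N_D(x)`. -/
def nbr (D : WOGraph V) (x : V) : Set V := {y | D.E x y ∨ D.E y x}

/-- `N_D(A)` for a set `A` of vertices. -/
def nbrS (D : WOGraph V) (A : Set V) : Set V := {y | ∃ a ∈ A, y ∈ D.nbr a}

/-- `N⁺_D(A)` for a set `A` of vertices. -/
def outNS (D : WOGraph V) (A : Set V) : Set V := {y | ∃ a ∈ A, D.E a y}

/-- `V⁺`, the set of vertices of weight `> 1`. -/
def Vplus (D : WOGraph V) : Set V := {x | 1 < D.w x}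

/-- A vertex cover of `D`. -/
def IsVC (D : WOGraph V) (C : Set V) : Prop := ∀ u v, D.E u v → u ∈ C ∨ v ∈ C

/-- `L₁(C)`. -/
def L1 (D : WOGraph V) (C : Set V) : Set V := {x | x ∈ C ∧ ∃ y, D.E x y ∧ y ∉ C}

/-- `L₂(C)`. -/
def L2 (D : WOGraph V) (C : Set V) : Set V :=
  {x | x ∈ C ∧ x ∉ D.L1 C ∧ ∃ y, D.E y x ∧ y ∉ C}

/-- `L₃(C)`. -/
def L3 (D : WOGraph V) (C : Set V) : Set V := {x | x ∈ C ∧ x ∉ D.L1 C ∧ x ∉ D.L2 C}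

/-- A strong vertex cover of `D`. -/
def IsStrongVC (D : WOGraph V) (C : Set V) : Prop :=
  D.IsVC C ∧ ∀ x ∈ D.L3 C, ∃ y, D.E y x ∧ y ∈ C ∧ y ∉ D.L1 C ∧ 1 < D.w y

/-- A weighted oriented subgraph of `D`. -/
structure OSub (D : WOGraph V) where
  verts : Set V
  E : V → V → Prop
  sub : ∀ u v, E u v → D.E u v
  memL : ∀ u v, E u v → u ∈ verts
  memR : ∀ u v, E u v → v ∈ verts

namespace OSub

variable {D : WOGraph V}

/-- The underlying simple graph of a weighted oriented subgraph. -/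
def graph (H : D.OSub) : SimpleGraph V := SimpleGraph.fromRel H.E

/-- Neighbourhood inside the subgraph. -/
def nbr (H : D.OSub) (x : V) : Set V := {y | H.E x y ∨ H.E y x}

/-- Degree inside the subgraph. -/
noncomputable def deg (H : D.OSub) (x : V) : ℕ := (H.nbr x).ncard

/-- `H` is contained in `K`. -/
def le (H K : D.OSub) : Prop := H.verts ⊆ K.verts ∧ ∀ u v, H.E u v → K.E u v

end OSub

/-- The induced weighted oriented subgraph on a set `A` of vertices. -/
def induced (D : WOGraph V) (A : Set V) : D.OSub where
  verts := A
  E u v := D.E u v ∧ u ∈ A ∧ v ∈ A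
  sub _ _ h := h.1
  memL _ _ h := h.2.1
  memR _ _ h := h.2.2

/-- `K` is an induced weighted oriented subgraph of `D`. -/
def IsInducedSub {D : WOGraph V} (K : D.OSub) : Prop :=
  ∀ u v, D.E u v → u ∈ K.verts → v ∈ K.verts → K.E u v

/-- A root oriented tree (ROT) with parent `v`. -/
def IsROT (D : WOGraph V) (T : D.OSub) (v : V) : Prop :=
  v ∈ T.verts ∧ T.graph.IsAcyclic ∧
  (∀ x ∈ T.verts, Relation.ReflTransGen T.E v x) ∧
  (∀ x ∈ T.verts, D.w x = 1 → (T.deg x = 1 ∧ x ≠ v) ∨ (T.verts = {v} ∧ x = v))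

/-- A unicycle oriented subgraph whose (unique) cycle has vertex set `Cs`. -/
def IsUnicycle (D : WOGraph V) (B : D.OSub) (Cs : Set V) : Prop :=
  (∃ (n : ℕ) (f : ZMod n → V), 3 ≤ n ∧ Function.Injective f ∧ Set.range f = Cs ∧
      ∀ i, B.E (f i) (f (i + 1))) ∧
  (∀ (a : V) (p : B.graph.Walk a a), p.IsCycle → {x | x ∈ p.support} = Cs) ∧
  (∀ y ∈ B.verts, y ∉ Cs → ∃ x ∈ Cs, Relation.ReflTransGen B.E x y) ∧
  (∀ x ∈ B.verts, D.w x = 1 → B.deg x = 1)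

/-- A `⋆`-semi-forest structure on a weighted oriented subgraph `H` of `D`. -/
structure SSF (D : WOGraph V) (H : D.OSub) where
  r : ℕ
  s : ℕ
  T : Fin r → D.OSub
  parent : Fin r → V
  B : Fin s → D.OSub
  Cs : Fin s → Set V
  hT : ∀ i, D.IsROT (T i) (parent i)
  hB : ∀ j, D.IsUnicycle (B j) (Cs j)
  hverts : H.verts = (⋃ i, (T i).verts) ∪ (⋃ j, (B j).verts)
  hE : ∀ u v, H.E u v ↔ ((∃ i, (T i).E u v) ∨ (∃ j, (B j).E u v))
  hTT : ∀ i i', i ≠ i' → Disjoint (T i).verts (T i').verts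
  hBB : ∀ j j', j ≠ j' → Disjoint (B j).verts (B j').verts
  hTB : ∀ i j, Disjoint (T i).verts (B j).verts
  wv : Fin r → V
  hwv_not : ∀ i, wv i ∉ H.verts
  hwv_nbr : ∀ i, wv i ∈ D.nbr (parent i)
  W1 : Set V
  W2 : Set V
  hW_union : W1 ∪ W2 = Set.range wv
  hW_disj : Disjoint W1 W2
  hW1_stable : ∀ x ∈ W1, ∀ y ∈ W1, ¬ D.graph.Adj x y
  hW2_plus : W2 ⊆ D.Vplus
  hW2_edge : ∀ i, wv i ∈ W2 → D.E (wv i) (parent i)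
  hW1_out : D.outNS (W2 ∪ ({x | x ∈ H.verts ∧ 2 ≤ H.deg x} ∪
      {x | (∃ i, parent i = x) ∧ H.deg x = 1})) ∩ W1 = ∅

/-- The set `H̃` associated with a `⋆`-semi-forest. -/
noncomputable def SSF.tilde {D : WOGraph V} {H : D.OSub} (F : D.SSF H) : Set V :=
  {x | x ∈ H.verts ∧ 2 ≤ H.deg x} ∪ {x | (∃ i, F.parent i = x) ∧ H.deg x = 1}

/-- `K` has a generating `⋆`-semi-forest. -/
def HasGenSSF (D : WOGraph V) (K : D.OSub) : Prop :=
  ∃ H : D.OSub, Nonempty (D.SSF H) ∧ H.verts = K.verts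

/-- The `⋆`-condition for a 5-tuple `(a', a, b, b', c)` written along an induced 5-cycle. -/
def StarCond (D : WOGraph V) (a' a b b' c : V) : Prop :=
  (D.E a' a ∧ D.w a' = 1) ∧
  (D.inN a ⊆ D.nbr c ∧ D.inN a ∩ D.Vplus ⊆ D.inN c) ∧
  (D.nbr b' ⊆ D.nbr a' ∪ D.outN a ∧ D.inN b' ∩ D.Vplus ⊆ D.inN a')

/-- The `⋆`-property for an induced 5-cycle `z 0, z 1, z 2, z 3, z 4`. -/
def HasStarProp (D : WOGraph V) (z : Fin 5 → V) : Prop :=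
  ∀ i : Fin 5,
    (D.E (z i) (z (i + 1)) ∧ 1 < D.w (z i) →
      StarCond D (z (i - 1)) (z i) (z (i + 1)) (z (i + 2)) (z (i + 3))) ∧
    (D.E (z (i + 1)) (z i) ∧ 1 < D.w (z (i + 1)) →
      StarCond D (z (i + 2)) (z (i + 1)) (z i) (z (i - 1)) (z (i - 2)))

/-- The edge ideal `I(D)` of a weighted oriented graph in `k[x_v : v ∈ V]`. -/
noncomputable def edgeIdeal (k : Type) [Field k] (D : WOGraph V) : Ideal (MvPolynomial V k) :=
  Ideal.span {f | ∃ u v, D.E u v ∧ f = MvPolynomial.X u * MvPolynomial.X v ^ D.w v}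

end WOGraph

/-! ## Generic graph notions -/

/-- A vertex cover of a simple graph. -/
def gVC {W : Type} (G : SimpleGraph W) (C : Set W) : Prop :=
  ∀ u v, G.Adj u v → u ∈ C ∨ v ∈ C

/-- The vertex cover number `τ(G)`. -/
noncomputable def tau {W : Type} (G : SimpleGraph W) : ℕ :=
  sInf {n | ∃ C : Set W, gVC G C ∧ C.ncard = n}

/-- A stable (independent) set. -/
def Stable {W : Type} (G : SimpleGraph W) (S : Set W) : Prop :=
  ∀ x ∈ S, ∀ y ∈ S, ¬ G.Adj x y

/-- `G` is well-covered: all maximal stable sets have the same cardinality. -/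
def WellCovered {W : Type} (G : SimpleGraph W) : Prop :=
  ∀ S T : Set W, Maximal (Stable G) S → Maximal (Stable G) T → S.ncard = T.ncard

/-- `e` is (the vertex set of) an edge of `G`. -/
def IsEdgeSet {W : Type} (G : SimpleGraph W) (e : Set W) : Prop :=
  ∃ u v, G.Adj u v ∧ e = {u, v}

/-- An edge `e = {b, b'}` has the property (P). -/
def PropP {W : Type} (G : SimpleGraph W) (e : Set W) : Prop :=
  ∀ a b a' b', e = {b, b'} → G.Adj a b → G.Adj a' b' → a ∉ e → a' ∉ e → G.Adj a a'

/-- A matching of `G`, as a set of (vertex sets of) edges. -/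
def IsMatchingSet {W : Type} (G : SimpleGraph W) (M : Set (Set W)) : Prop :=
  (∀ e ∈ M, IsEdgeSet G e) ∧ M.Pairwise Disjoint

/-- A perfect matching of `G`. -/
def IsPerfectMatchingSet {W : Type} (G : SimpleGraph W) (M : Set (Set W)) : Prop :=
  IsMatchingSet G M ∧ ⋃₀ M = Set.univ

/-- The matching number `ν(G)`. -/
noncomputable def nu {W : Type} (G : SimpleGraph W) : ℕ :=
  sSup {n | ∃ M, IsMatchingSet G M ∧ M.ncard = n}

/-- The degree of a vertex. -/
noncomputable def gdeg {W : Type} (G : SimpleGraph W) (x : W) : ℕ := (G.neighborSet x).ncard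

/-- `v` is a simplicial vertex: its closed neighbourhood is a clique. -/
def IsSimplicialVtx {W : Type} (G : SimpleGraph W) (v : W) : Prop :=
  G.IsClique (insert v (G.neighborSet v))

/-- The set `S_G` of (vertex sets of) simplexes of `G`. -/
def SimplexSets {W : Type} (G : SimpleGraph W) : Set (Set W) :=
  {S | ∃ v, IsSimplicialVtx G v ∧ S = insert v (G.neighborSet v)}

/-- `G` is a simplicial graph. -/
def SimplicialGraph {W : Type} (G : SimpleGraph W) : Prop :=
  ∀ v, IsSimplicialVtx G v ∨ ∃ u, G.Adj v u ∧ IsSimplicialVtx G u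

/-- The cycle graph on `ZMod n`. -/
def cycGraph (n : ℕ) : SimpleGraph (ZMod n) := SimpleGraph.fromRel (fun i j => j = i + 1)

/-- `G` is chordal: it has no induced cycles of length `≥ 4`. -/
def Chordal {W : Type} (G : SimpleGraph W) : Prop :=
  ∀ n : ℕ, 4 ≤ n → ∀ A : Set W, IsEmpty (G.induce A ≃g cycGraph n)

/-- `G` has a cycle of length `k`. -/
def HasCycleLen {W : Type} (G : SimpleGraph W) (k : ℕ) : Prop :=
  ∃ (a : W) (p : G.Walk a a), p.IsCycle ∧ p.length = k

/-- `z 0, z 1, z 2, z 3, z 4` is an induced 5-cycle of `G`. -/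
def IsInduced5Cycle {W : Type} (G : SimpleGraph W) (z : Fin 5 → W) : Prop :=
  Function.Injective z ∧ ∀ i j : Fin 5, G.Adj (z i) (z j) ↔ (j = i + 1 ∨ i = j + 1)

/-- A basic 5-cycle: an induced 5-cycle without two adjacent vertices of degree `≥ 3`. -/
def IsBasic5Cycle {W : Type} (G : SimpleGraph W) (z : Fin 5 → W) : Prop :=
  IsInduced5Cycle G z ∧ ∀ i : Fin 5, ¬ (3 ≤ gdeg G (z i) ∧ 3 ≤ gdeg G (z (i + 1)))

/-- The set `C_G` of (vertex sets of) basic 5-cycles of `G`. -/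
def Basic5Sets {W : Type} (G : SimpleGraph W) : Set (Set W) :=
  {A | ∃ z : Fin 5 → W, IsBasic5Cycle G z ∧ A = Set.range z}

/-- The clique number `ω(G)`. -/
noncomputable def cliqueNum' {W : Type} (G : SimpleGraph W) : ℕ :=
  sSup {n | ∃ s : Set W, G.IsClique s ∧ s.ncard = n}

/-- `G` is a perfect graph. -/
def IsPerfectGraph {W : Type} (G : SimpleGraph W) : Prop :=
  ∀ A : Set W, (G.induce A).chromaticNumber = (cliqueNum' (G.induce A) : ℕ∞)

/-- A `τ`-reduction of `G` into the induced subgraphs on the `A i`. -/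
noncomputable def TauReduction {W : Type} (G : SimpleGraph W) (s : ℕ) (A : Fin s → Set W) : Prop :=
  (∀ i j, i ≠ j → Disjoint (A i) (A j)) ∧ (⋃ i, A i) = Set.univ ∧
  tau G = ∑ i, tau (G.induce (A i))

/-- `G` is an SCQ graph witnessed by the matching `Q`. -/
def IsSCQ {V : Type} (D : WOGraph V) (Q : Set (Set V)) : Prop :=
  (Q = ∅ ∨ (IsMatchingSet D.graph Q ∧ ∀ e ∈ Q, PropP D.graph e)) ∧
  (∀ A ∈ SimplexSets D.graph ∪ Basic5Sets D.graph ∪ Q,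
    ∀ B ∈ SimplexSets D.graph ∪ Basic5Sets D.graph ∪ Q, A = B ∨ Disjoint A B) ∧
  ⋃₀ (SimplexSets D.graph ∪ Basic5Sets D.graph ∪ Q) = Set.univ

/-- An ideal is unmixed if all its associated primes have the same height. -/
def IsUnmixed {R : Type} [CommRing R] (I : Ideal R) : Prop :=
  ∀ p q : Ideal R, p ∈ associatedPrimes R (R ⧸ I) → q ∈ associatedPrimes R (R ⧸ I) →
    ∀ (hp : p.IsPrime) (hq : q.IsPrime),
      Order.height (⟨p, hp⟩ : PrimeSpectrum R) = Order.height (⟨q, hq⟩ : PrimeSpectrum R)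
/-! ## Concrete graphs -/

/-- The 7-cycle `C₇`. -/
def C7graph : SimpleGraph (ZMod 7) := cycGraph 7

/-- Vertices of `T₁₀`. -/
inductive T10V | v | a1 | a2 | a3 | b1 | b2 | b3 | c1 | c2 | c3
deriving DecidableEq

open T10V in
instance instFintypeT10V : Fintype T10V :=
  ⟨{v, a1, a2, a3, b1, b2, b3, c1, c2, c3}, fun x => by cases x <;> decide⟩

open T10V in
/-- The graph `T₁₀`. -/
def T10graph : SimpleGraph T10V := SimpleGraph.fromRel (fun x y =>
  (x, y) ∈ ([(v,a1), (v,a2), (v,a3), (a1,b1), (a2,b2), (a3,b3), (b1,c1), (b2,c2),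
    (b3,c3), (c1,c2), (c2,c3), (c3,c1)] : List (T10V × T10V)))

/-- Vertices of `Q₁₃`. -/
inductive Q13V | a1 | a2 | b1 | b2 | c1 | c2 | d1 | d2 | g1 | g2 | h | h' | v
deriving DecidableEq

open Q13V in
instance instFintypeQ13V : Fintype Q13V :=
  ⟨{a1, a2, b1, b2, c1, c2, d1, d2, g1, g2, h, h', v}, fun x => by cases x <;> decide⟩

open Q13V in
/-- The graph `Q₁₃`. -/
def Q13graph : SimpleGraph Q13V := SimpleGraph.fromRel (fun x y =>
  (x, y) ∈ ([(a1,a2), (a1,d1), (a2,d2), (d1,c1), (d1,g1), (d1,h), (d2,c2), (d2,g2),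
    (d2,h), (g1,b1), (g1,h'), (g2,b2), (g2,h'), (b1,c2), (b2,c1), (h,v),
    (h',v)] : List (Q13V × Q13V)))

/-- Vertices of `P₁₃`. -/
inductive P13V | a1 | a2 | a3 | a4 | b1 | b2 | b3 | b4 | c1 | c2 | d1 | d2 | v
deriving DecidableEq

open P13V in
instance instFintypeP13V : Fintype P13V :=
  ⟨{a1, a2, a3, a4, b1, b2, b3, b4, c1, c2, d1, d2, v}, fun x => by cases x <;> decide⟩

open P13V in
/-- The graph `P₁₃`. -/
def P13graph : SimpleGraph P13V := SimpleGraph.fromRel (fun x y =>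
  (x, y) ∈ ([(a1,a2), (a1,b1), (a2,b2), (a3,a4), (a3,b3), (a4,b4), (b1,c1), (b2,c1),
    (b3,c2), (b4,c2), (c1,c2), (d1,b1), (d1,b3), (d2,b2), (d2,b4), (v,d1),
    (v,d2)] : List (P13V × P13V)))

/-- Vertices of `P₁₄`. -/
inductive P14V | a1 | a2 | a3 | a4 | a5 | a6 | a7 | b1 | b2 | b3 | b4 | b5 | b6 | b7
deriving DecidableEq

open P14V in
instance instFintypeP14V : Fintype P14V :=
  ⟨{a1, a2, a3, a4, a5, a6, a7, b1, b2, b3, b4, b5, b6, b7}, fun x => by cases x <;> decide⟩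

open P14V in
/-- The graph `P₁₄`. -/
def P14graph : SimpleGraph P14V := SimpleGraph.fromRel (fun x y =>
  (x, y) ∈ ([(a1,a2), (a2,a3), (a3,a4), (a4,a5), (a5,a6), (a6,a7), (a7,a1),
    (a1,b1), (a2,b2), (a3,b3), (a4,b4), (a5,b5), (a6,b6), (a7,b7),
    (b1,b3), (b2,b4), (b3,b5), (b4,b6), (b5,b7), (b6,b1), (b7,b2)] : List (P14V × P14V)))

/-- Vertices of `P₁₀`. -/
inductive P10V | a1 | a2 | b1 | b2 | c1 | c2 | d1 | d2 | g1 | g2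
deriving DecidableEq

open P10V in
instance instFintypeP10V : Fintype P10V :=
  ⟨{a1, a2, b1, b2, c1, c2, d1, d2, g1, g2}, fun x => by cases x <;> decide⟩

open P10V in
/-- The graph `P₁₀`. -/
def P10graph : SimpleGraph P10V := SimpleGraph.fromRel (fun x y =>
  (x, y) ∈ ([(a1,b1), (b1,d2), (d2,d1), (d1,b2), (b2,a2), (a1,g1), (g1,d1), (g1,c1),
    (c1,c2), (c2,g2), (g2,a2), (d2,g2)] : List (P10V × P10V)))

/-!
Let `b` be `z 2` in case (a) and `z 4` in case (b): then `w b > 1`, `b → z 3` and `b ↛ z 0`.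
Extend `{z 0}` to an independent set `S` that is maximal among the independent sets avoiding the
out-neighbours of `z 1` and `b`, and take `C = Sᶜ`. A vertex of `L₃(C)` has no neighbour in `S`,
so by maximality it is an out-neighbour of `z 1` or of `b`; and `z 1`, `b` lie in `C ∖ L₁(C)`
because none of their out-neighbours is in `S`. On the cycle, `S` meets only `z 0`.
-/

theorem SimpleGraph.exists_isIndepSet_dominating {W : Type} [Finite W] (G : SimpleGraph W)
    {S₀ F : Set W} (hS₀F : S₀ ⊆ F) (hS₀ : G.IsIndepSet S₀) :
    ∃ S, S₀ ⊆ S ∧ S ⊆ F ∧ G.IsIndepSet S ∧ ∀ x ∈ F, x ∉ S → ∃ s ∈ S, G.Adj x s := by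
  obtain ⟨S, hS₀S, hmax⟩ :=
    Finite.exists_le_maximal (p := fun S : Set W => S ⊆ F ∧ G.IsIndepSet S) ⟨hS₀F, hS₀⟩
  refine ⟨S, hS₀S, hmax.prop.1, hmax.prop.2, fun x hxF hxS => ?_⟩
  by_contra! hx
  refine hxS (hmax.mem_of_prop_insert ⟨Set.insert_subset hxF hmax.prop.1, ?_⟩)
  exact Set.pairwise_insert.2
    ⟨hmax.prop.2, fun s hs _ => ⟨hx s hs, fun hsx => hx s hs hsx.symm⟩⟩

theorem ncard_compl_inter_range_eq_sub_one {α : Type} {n : ℕ} {z : Fin n → α}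
    (hz : Function.Injective z) {S : Set α} {i : Fin n} (hi : z i ∈ S)
    (hS : ∀ j, j ≠ i → z j ∉ S) : (Sᶜ ∩ Set.range z).ncard = n - 1 := by
  have hrange : Sᶜ ∩ Set.range z = Set.range z \ {z i} := by
    ext x
    constructor
    · rintro ⟨hxS, j, rfl⟩
      exact ⟨⟨j, rfl⟩, fun hji => hxS (hz hji ▸ hi)⟩
    · rintro ⟨⟨j, rfl⟩, hji⟩
      exact ⟨hS j (fun h => hji (h ▸ rfl)), j, rfl⟩
  rw [hrange, Set.ncard_sdiff_singleton_of_mem (Set.mem_range_self i),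
    Set.ncard_range_of_injective hz, Nat.card_eq_fintype_card, Fintype.card_fin]

namespace WOGraph

variable {V : Type} (D : WOGraph V)

theorem graph_adj_of_E {u v : V} (h : D.E u v) : D.graph.Adj u v :=
  (SimpleGraph.fromRel_adj _ _ _).2 ⟨fun huv => D.irrefl u (huv ▸ h), Or.inl h⟩

theorem isVC_compl_of_isIndepSet {S : Set V} (hS : D.graph.IsIndepSet S) : D.IsVC Sᶜ := by
  intro u v huv
  by_contra! h
  simp only [Set.mem_compl_iff, not_not] at h
  exact hS h.1 h.2 (D.graph_adj_of_E huv).ne (D.graph_adj_of_E huv)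

theorem notMem_L1_compl {S : Set V} {p : V} (hp : ∀ y, D.E p y → y ∉ S) : p ∉ D.L1 Sᶜ :=
  fun ⟨_, y, hpy, hyS⟩ => hp y hpy (not_not.1 hyS)

theorem notMem_of_adj_of_mem_L3_compl {S : Set V} {x y : V} (hx : x ∈ D.L3 Sᶜ)
    (hxy : D.graph.Adj x y) : y ∉ S := by
  obtain ⟨hxC, hxL1, hxL2⟩ := hx
  intro hyS
  rcases ((SimpleGraph.fromRel_adj _ _ _).1 hxy).2 with hE | hE
  · exact hxL1 ⟨hxC, y, hE, not_not.2 hyS⟩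
  · exact hxL2 ⟨hxC, hxL1, y, hE, not_not.2 hyS⟩

theorem isStrongVC_compl {P S : Set V} (hPw : ∀ p ∈ P, 1 < D.w p) (hPS : Disjoint P S)
    (hS : D.graph.IsIndepSet S) (hSout : Disjoint (D.outNS P) S)
    (hdom : ∀ x ∉ D.outNS P, x ∉ S → ∃ s ∈ S, D.graph.Adj x s) : D.IsStrongVC Sᶜ := by
  refine ⟨D.isVC_compl_of_isIndepSet hS, fun x hx => ?_⟩
  by_cases hxout : x ∈ D.outNS P
  · obtain ⟨p, hp, hpx⟩ := hxout
    refine ⟨p, hpx, hPS.notMem_of_mem_left hp, D.notMem_L1_compl fun y hpy =>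
      hSout.notMem_of_mem_left ⟨p, hp, hpy⟩, hPw p hp⟩
  · obtain ⟨s, hs, hxs⟩ := hdom x hxout hx.1
    exact absurd hs (D.notMem_of_adj_of_mem_L3_compl hx hxs)

end WOGraph

/-- Lemma `lemma-sep11`. -/
theorem stmt7 {V : Type} [Fintype V] (D : WOGraph V) (z : Fin 5 → V)
    (hz : IsBasic5Cycle D.graph z)
    (h12 : D.E (z 0) (z 1)) (h23 : D.E (z 1) (z 2)) (hw : 1 < D.w (z 1))
    (hcase : (D.E (z 2) (z 3) ∧ 1 < D.w (z 2)) ∨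
             (D.E (z 0) (z 4) ∧ D.E (z 4) (z 3) ∧ 1 < D.w (z 4))) :
    ∃ C : Set V, D.IsStrongVC C ∧ (C ∩ Set.range z).ncard = 4 := by
  obtain ⟨⟨hinj, hadj⟩, -⟩ := hz
  have h04 : D.graph.Adj (z 0) (z 4) := (hadj 0 4).2 (Or.inr rfl)
  obtain ⟨b, hwb, hb3, hb0, hb⟩ : ∃ b, 1 < D.w b ∧ D.E b (z 3) ∧ ¬ D.E b (z 0) ∧
      (D.E (z 1) b ∨ D.graph.Adj (z 0) b) := by
    rcases hcase with ⟨h34, hw3⟩ | ⟨h05, h54, hw5⟩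
    · exact ⟨z 2, hw3, h34, fun h => by simpa using (hadj 2 0).1 (D.graph_adj_of_E h), Or.inl h23⟩
    · exact ⟨z 4, hw5, h54, D.asymm _ _ h05, Or.inr h04⟩
  set P : Set V := {z 1, b}
  have hz0P : z 0 ∉ D.outNS P := by
    rintro ⟨p, rfl | rfl, hp⟩
    exacts [D.asymm _ _ h12 hp, hb0 hp]
  obtain ⟨S, hS₀S, hSF, hS, hdom⟩ := D.graph.exists_isIndepSet_dominating
    (F := (D.outNS P)ᶜ) (Set.singleton_subset_iff.2 hz0P) (Set.pairwise_singleton (z 0) _)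
  have hz0S : z 0 ∈ S := hS₀S rfl
  have hout : ∀ y ∈ D.outNS P, y ∉ S := fun y hy hyS => hSF hyS hy
  have hnbr : ∀ y, D.graph.Adj (z 0) y → y ∉ S := fun y hy hyS => hS hz0S hyS hy.ne hy
  have hPS : Disjoint P S := by
    refine Set.disjoint_left.2 ?_
    rintro p (rfl | rfl)
    exacts [hnbr _ (D.graph_adj_of_E h12), hb.elim (fun h => hout _ ⟨z 1, .inl rfl, h⟩) (hnbr p)]
  refine ⟨Sᶜ, D.isStrongVC_compl (by simpa [P] using ⟨hw, hwb⟩) hPS hS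
    (Set.disjoint_left.2 hout) hdom, ?_⟩
  refine ncard_compl_inter_range_eq_sub_one hinj hz0S fun j hj => ?_
  fin_cases j
  · exact absurd rfl hj
  · exact hnbr _ (D.graph_adj_of_E h12)
  · exact hout _ ⟨z 1, .inl rfl, h23⟩
  · exact hout _ ⟨b, .inr rfl, hb3⟩
  · exact hnbr _ h04
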